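/- arXiv:0704.3148 — 7 statements merged into one kernel-verified Lean document; each statement's English description precedes it below -/
import Mathlib

section
/- Let (M,d) be a metric space whose completion is \bar M_C (with extended distance also denoted d) and Cauchy boundary ∂_C(M)=\bar M_C∖M, and let I=(a,b)⊆ℝ, −∞≤a<b≤+∞. Let P be a nonempty TIP of V=I×M of the form P=I⁻[γ₊] for a future-directed timelike curve γ₊(t)=(t,c₊(t)), t∈[w,Ω₀)⊆I, and let F be a nonempty TIF of the form F=I⁺[γ₋] for a past-directed timelike curve γ₋(t)=(t,c₋(t)), t∈(Ω₁,w']⊆I. Then P∼_S F if and only if there exist x₀∈∂_C(M) and Ω∈(a,b) such that P={(t',x')∈I×M : t'<Ω−d(x',x₀)} and F={(t',x')∈I×M : t'>Ω+d(x',x₀)}. -/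
open Set
open scoped ENNReal NNReal

noncomputable section

/-- The product spacetime `V = I × M`, `I = (a,b) ⊆ ℝ`, as a subset of `ℝ × M`. -/
def Spacetime {M : Type*} [MetricSpace M] (a b : EReal) : Set (ℝ × M) :=
  {p | a < (p.1 : EReal) ∧ (p.1 : EReal) < b}

/-- The chronology relation on the product spacetime: `(t₀,x₀) ≪ (t₁,x₁)` iff both points
lie in `V = (a,b) × M` and `t₀ < t₁ - d(x₀,x₁)`. -/
def Chron {M : Type*} [MetricSpace M] (a b : EReal) (p q : ℝ × M) : Prop :=
  p ∈ Spacetime a b ∧ q ∈ Spacetime a b ∧ p.1 < q.1 - dist p.2 q.2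

/-- The chronological past `I⁻(p)`. -/
def IminusPt {M : Type*} [MetricSpace M] (a b : EReal) (p : ℝ × M) : Set (ℝ × M) :=
  {q | Chron a b q p}

/-- The chronological future `I⁺(p)`. -/
def IplusPt {M : Type*} [MetricSpace M] (a b : EReal) (p : ℝ × M) : Set (ℝ × M) :=
  {q | Chron a b p q}

/-- `I⁻[S]`. -/
def IminusSet {M : Type*} [MetricSpace M] (a b : EReal) (S : Set (ℝ × M)) : Set (ℝ × M) :=
  {q | ∃ s ∈ S, Chron a b q s}

/-- `I⁺[S]`. -/
def IplusSet {M : Type*} [MetricSpace M] (a b : EReal) (S : Set (ℝ × M)) : Set (ℝ × M) :=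
  {q | ∃ s ∈ S, Chron a b s q}

/-- A past set: `P = I⁻[P]`. -/
def IsPastSet {M : Type*} [MetricSpace M] (a b : EReal) (P : Set (ℝ × M)) : Prop :=
  IminusSet a b P = P

/-- A future set: `F = I⁺[F]`. -/
def IsFutureSet {M : Type*} [MetricSpace M] (a b : EReal) (F : Set (ℝ × M)) : Prop :=
  IplusSet a b F = F

/-- An indecomposable past set (IP). -/
def IsIP {M : Type*} [MetricSpace M] (a b : EReal) (P : Set (ℝ × M)) : Prop :=
  P.Nonempty ∧ IsPastSet a b P ∧
    ∀ P₁ P₂ : Set (ℝ × M), IsPastSet a b P₁ → IsPastSet a b P₂ → P = P₁ ∪ P₂ →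
      P₁ = P ∨ P₂ = P

/-- An indecomposable future set (IF). -/
def IsIF {M : Type*} [MetricSpace M] (a b : EReal) (F : Set (ℝ × M)) : Prop :=
  F.Nonempty ∧ IsFutureSet a b F ∧
    ∀ F₁ F₂ : Set (ℝ × M), IsFutureSet a b F₁ → IsFutureSet a b F₂ → F = F₁ ∪ F₂ →
      F₁ = F ∨ F₂ = F

/-- A terminal indecomposable past set (TIP): an IP that is not the past of any point of `V`. -/
def IsTIP {M : Type*} [MetricSpace M] (a b : EReal) (P : Set (ℝ × M)) : Prop :=
  IsIP a b P ∧ ∀ p ∈ Spacetime (M := M) a b, P ≠ IminusPt a b p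

/-- A terminal indecomposable future set (TIF). -/
def IsTIF {M : Type*} [MetricSpace M] (a b : EReal) (F : Set (ℝ × M)) : Prop :=
  IsIF a b F ∧ ∀ p ∈ Spacetime (M := M) a b, F ≠ IplusPt a b p

/-- The common future `↑P = I⁺[{q ∈ V : p ≪ q for all p ∈ P}]`. -/
def CommonFuture {M : Type*} [MetricSpace M] (a b : EReal) (P : Set (ℝ × M)) : Set (ℝ × M) :=
  IplusSet a b {q | q ∈ Spacetime a b ∧ ∀ p ∈ P, Chron a b p q}

/-- The common past `↓F = I⁻[{q ∈ V : q ≪ f for all f ∈ F}]`. -/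
def CommonPast {M : Type*} [MetricSpace M] (a b : EReal) (F : Set (ℝ × M)) : Set (ℝ × M) :=
  IminusSet a b {q | q ∈ Spacetime a b ∧ ∀ f ∈ F, Chron a b q f}

/-- `P ∼ₛ F`: `P` is a maximal IP among those contained in `↓F`, and `F` is a maximal IF
among those contained in `↑P`. -/
def SRel {M : Type*} [MetricSpace M] (a b : EReal) (P F : Set (ℝ × M)) : Prop :=
  IsIP a b P ∧ IsIF a b F ∧ P ⊆ CommonPast a b F ∧ F ⊆ CommonFuture a b P ∧
    (∀ P' : Set (ℝ × M), IsIP a b P' → P' ⊆ CommonPast a b F → P ⊆ P' → P' = P) ∧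
    (∀ F' : Set (ℝ × M), IsIF a b F' → F' ⊆ CommonFuture a b P → F ⊆ F' → F' = F)

/-- The chronological past `I⁻[γ]` of the curve `γ(t) = (t, c(t))`, `t ∈ D`. -/
def PastOfCurve {M : Type*} [MetricSpace M] (a b : EReal) (c : ℝ → M) (D : Set ℝ) :
    Set (ℝ × M) :=
  {q | ∃ t ∈ D, Chron a b q (t, c t)}

/-- The chronological future `I⁺[γ]` of the curve `γ(t) = (t, c(t))`, `t ∈ D`. -/
def FutureOfCurve {M : Type*} [MetricSpace M] (a b : EReal) (c : ℝ → M) (D : Set ℝ) :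
    Set (ℝ × M) :=
  {q | ∃ t ∈ D, Chron a b (t, c t) q}

/-- The Busemann function `b_c(x) = sup_{t ∈ D} (t - d(x, c(t))) ∈ ℝ ∪ {±∞}`. -/
def Busemann {M : Type*} [MetricSpace M] (c : ℝ → M) (D : Set ℝ) (x : M) : EReal :=
  sSup {y : EReal | ∃ t ∈ D, y = ((t - dist x (c t) : ℝ) : EReal)}

/-!
If `Ω₀ = +∞`, the curve `γ₊` outruns every point (its speed is `Kp < 1`), so `I⁻[γ₊]` is all
of `V` and has empty common future. Otherwise `c₊(t)` converges, as `t → Ω₀`, to a point `x₀` of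
the completion, and `P` is the cone `t' < Ω₀ - d(x', x₀)`. Approximating the apex `(Ω₀, x₀)` by
points of `V` shows that the common future of this cone is the opposite cone
`t' > Ω₀ + d(x', x₀)` and vice versa; the latter is an IF, being the future of a chain of points
converging to the apex, so the maximality in `P ∼_S F` forces `F` to be it. Finally `x₀ ∉ M`,
since otherwise `P = I⁻((Ω₀, x₀))`.
-/

section ProductSpacetime

open UniformSpace Filter Topology

variable {M : Type*} [MetricSpace M] {a b : EReal}

def pastCone (a b : EReal) (Ω : ℝ) (x₀ : Completion M) : Set (ℝ × M) :=
  {p | p ∈ Spacetime a b ∧ p.1 < Ω - dist (p.2 : Completion M) x₀}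

def futureCone (a b : EReal) (Ω : ℝ) (x₀ : Completion M) : Set (ℝ × M) :=
  {p | p ∈ Spacetime a b ∧ Ω + dist (p.2 : Completion M) x₀ < p.1}

theorem UniformSpace.Completion.exists_dist_coe_lt (x₀ : Completion M) {ε : ℝ} (hε : 0 < ε) :
    ∃ y : M, dist (y : Completion M) x₀ < ε := by
  obtain ⟨y, hy⟩ := Metric.denseRange_iff.mp Completion.denseRange_coe x₀ ε hε
  exact ⟨y, by rwa [dist_comm]⟩

theorem dist_le_dist_coe_add_dist_coe (x y : M) (z : Completion M) :
    dist x y ≤ dist (x : Completion M) z + dist (y : Completion M) z := by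
  rw [← Completion.dist_eq]
  exact dist_triangle_right _ _ _

theorem dist_coe_sub_dist_coe_le (x y : M) (z : Completion M) :
    dist (x : Completion M) z - dist (y : Completion M) z ≤ dist x y := by
  rw [← Completion.dist_eq x y]
  linarith [dist_triangle (x : Completion M) y z]

theorem Chron.trans {p q r : ℝ × M} (hpq : Chron a b p q) (hqr : Chron a b q r) :
    Chron a b p r := by
  refine ⟨hpq.1, hqr.2.1, ?_⟩
  linarith [dist_triangle p.2 q.2 r.2, hpq.2.2, hqr.2.2]

theorem not_chron_self (p : ℝ × M) : ¬Chron a b p p := fun h => by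
  linarith [h.2.2, dist_self p.2]

theorem chron_of_add_dist_lt {p q : ℝ × M} (hp : p ∈ Spacetime a b) (hq : q ∈ Spacetime a b)
    {x₀ : Completion M}
    (h : p.1 + dist (p.2 : Completion M) x₀ + dist (q.2 : Completion M) x₀ < q.1) :
    Chron a b p q :=
  ⟨hp, hq, by linarith [dist_le_dist_coe_add_dist_coe p.2 q.2 x₀]⟩

section Chains

variable {p : ℕ → ℝ × M}

theorem Chron.of_chain (hp : ∀ n, Chron a b (p (n + 1)) (p n)) {n m : ℕ} (hnm : n ≤ m)
    {q : ℝ × M} (hq : Chron a b (p n) q) : Chron a b (p m) q := by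
  induction m, hnm using Nat.le_induction with
  | base => exact hq
  | succ m _ ih => exact (hp m).trans ih

theorem iplusSet_range_subset_of_frequently (hp : ∀ n, Chron a b (p (n + 1)) (p n))
    {G : Set (ℝ × M)} (hG : IsFutureSet a b G) (h : ∃ᶠ m in atTop, p m ∈ G) :
    IplusSet a b (range p) ⊆ G := by
  rintro q ⟨-, ⟨n, rfl⟩, hq⟩
  obtain ⟨m, hm, hnm⟩ := (h.and_eventually (eventually_ge_atTop n)).exists
  exact hG ▸ ⟨p m, hm, Chron.of_chain hp hnm hq⟩

theorem isIF_iplusSet_range (hp : ∀ n, Chron a b (p (n + 1)) (p n)) :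
    IsIF a b (IplusSet a b (range p)) := by
  have hp_mem (n : ℕ) : p n ∈ IplusSet a b (range p) := ⟨p (n + 1), mem_range_self _, hp n⟩
  refine ⟨⟨p 0, hp_mem 0⟩, ?_, fun F₁ F₂ h₁ h₂ hF => ?_⟩
  · refine subset_antisymm ?_ ?_
    · rintro q ⟨f, ⟨s, hs, hsf⟩, hfq⟩
      exact ⟨s, hs, hsf.trans hfq⟩
    · rintro q ⟨-, ⟨n, rfl⟩, hq⟩
      exact ⟨p n, hp_mem n, hq⟩
  by_cases h : ∃ᶠ m in atTop, p m ∈ F₁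
  · exact Or.inl ((iplusSet_range_subset_of_frequently hp h₁ h).antisymm' (hF ▸ subset_union_left))
  · have h' : ∃ᶠ m in atTop, p m ∈ F₂ :=
      (not_frequently.mp h).frequently.mono fun m hm => ((hF ▸ hp_mem m).resolve_left hm)
    exact Or.inr
      ((iplusSet_range_subset_of_frequently hp h₂ h').antisymm' (hF ▸ subset_union_right))

end Chains

section Cones

variable {Ω : ℝ} {x₀ : Completion M}

theorem coe_lt_of_mem_futureCone {f : ℝ × M} (hf : f ∈ futureCone a b Ω x₀) :
    (Ω : EReal) < b := by
  have : Ω < f.1 := by linarith [hf.2, dist_nonneg (x := (f.2 : Completion M)) (y := x₀)]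
  exact (EReal.coe_lt_coe_iff.mpr this).trans hf.1.2

theorem lt_coe_of_mem_pastCone {p : ℝ × M} (hp : p ∈ pastCone a b Ω x₀) : a < Ω := by
  have : p.1 < Ω := by linarith [hp.2, dist_nonneg (x := (p.2 : Completion M)) (y := x₀)]
  exact hp.1.1.trans (EReal.coe_lt_coe_iff.mpr this)

theorem mem_futureCone_of_chron {u q : ℝ × M} (hu : Ω + dist (u.2 : Completion M) x₀ ≤ u.1)
    (h : Chron a b u q) : q ∈ futureCone a b Ω x₀ :=
  ⟨h.2.1, by linarith [h.2.2, dist_coe_sub_dist_coe_le q.2 u.2 x₀, dist_comm u.2 q.2]⟩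

theorem mem_pastCone_of_chron {u q : ℝ × M} (hu : u.1 ≤ Ω - dist (u.2 : Completion M) x₀)
    (h : Chron a b q u) : q ∈ pastCone a b Ω x₀ :=
  ⟨h.1, by linarith [h.2.2, dist_coe_sub_dist_coe_le q.2 u.2 x₀]⟩

theorem chron_of_mem_pastCone {p u : ℝ × M} (hp : p ∈ pastCone a b Ω x₀)
    (hu : u ∈ Spacetime a b) (h : Ω + dist (u.2 : Completion M) x₀ ≤ u.1) : Chron a b p u :=
  ⟨hp.1, hu, by linarith [hp.2, dist_le_dist_coe_add_dist_coe p.2 u.2 x₀]⟩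

theorem chron_of_mem_futureCone {f u : ℝ × M} (hf : f ∈ futureCone a b Ω x₀)
    (hu : u ∈ Spacetime a b) (h : u.1 ≤ Ω - dist (u.2 : Completion M) x₀) : Chron a b u f :=
  ⟨hu, hf.1, by linarith [hf.2, dist_le_dist_coe_add_dist_coe u.2 f.2 x₀]⟩

theorem exists_mem_pastCone_near_apex (ha : a < Ω) (hb : (Ω : EReal) ≤ b) {ε : ℝ} (hε : 0 < ε) :
    ∃ p ∈ pastCone a b Ω x₀, Ω - ε < p.1 ∧ dist (p.2 : Completion M) x₀ < ε := by
  obtain ⟨r, har, hrΩ⟩ := EReal.lt_iff_exists_real_btwn.mp ha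
  rw [EReal.coe_lt_coe_iff] at hrΩ
  set δ := min (ε / 2) (Ω - r)
  have hδε : δ < ε := (min_le_left _ _).trans_lt (by linarith)
  have hδ : 0 < δ := lt_min (by linarith) (by linarith)
  obtain ⟨y, hy⟩ := Completion.exists_dist_coe_lt x₀ hδ
  refine ⟨(Ω - δ, y), ⟨⟨?_, ?_⟩, by dsimp only; linarith⟩, by dsimp only; linarith, hy.trans hδε⟩
  · exact har.trans_le (EReal.coe_le_coe_iff.mpr (by linarith [min_le_right (ε / 2) (Ω - r)]))
  · exact (EReal.coe_lt_coe_iff.mpr (by linarith)).trans_le hb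

theorem exists_mem_futureCone_near_apex (ha : a ≤ Ω) (hb : (Ω : EReal) < b) {ε : ℝ} (hε : 0 < ε) :
    ∃ f ∈ futureCone a b Ω x₀, f.1 < Ω + ε ∧ dist (f.2 : Completion M) x₀ < ε := by
  obtain ⟨r, hΩr, hrb⟩ := EReal.lt_iff_exists_real_btwn.mp hb
  rw [EReal.coe_lt_coe_iff] at hΩr
  set δ := min (ε / 2) (r - Ω)
  have hδε : δ < ε := (min_le_left _ _).trans_lt (by linarith)
  have hδ : 0 < δ := lt_min (by linarith) (by linarith)
  obtain ⟨y, hy⟩ := Completion.exists_dist_coe_lt x₀ hδ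
  refine ⟨(Ω + δ, y), ⟨⟨?_, ?_⟩, by dsimp only; linarith⟩, by dsimp only; linarith, hy.trans hδε⟩
  · exact ha.trans_lt (EReal.coe_lt_coe_iff.mpr (by linarith))
  · exact (EReal.coe_le_coe_iff.mpr (by linarith [min_le_right (ε / 2) (r - Ω)])).trans_lt hrb

theorem add_dist_le_of_forall_chron_pastCone (ha : a < Ω) (hb : (Ω : EReal) ≤ b) {u : ℝ × M}
    (hu : ∀ p ∈ pastCone a b Ω x₀, Chron a b p u) : Ω + dist (u.2 : Completion M) x₀ ≤ u.1 := by
  refine le_of_forall_pos_lt_add fun ε hε => ?_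
  obtain ⟨p, hp, hp₁, hp₂⟩ := exists_mem_pastCone_near_apex (x₀ := x₀) ha hb (half_pos hε)
  linarith [(hu p hp).2.2, dist_coe_sub_dist_coe_le u.2 p.2 x₀, dist_comm p.2 u.2]

theorem le_sub_dist_of_forall_chron_futureCone (ha : a ≤ Ω) (hb : (Ω : EReal) < b) {u : ℝ × M}
    (hu : ∀ f ∈ futureCone a b Ω x₀, Chron a b u f) : u.1 ≤ Ω - dist (u.2 : Completion M) x₀ := by
  refine le_of_forall_pos_lt_add fun ε hε => ?_
  obtain ⟨f, hf, hf₁, hf₂⟩ := exists_mem_futureCone_near_apex (x₀ := x₀) ha hb (half_pos hε)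
  linarith [(hu f hf).2.2, dist_coe_sub_dist_coe_le u.2 f.2 x₀]

theorem commonFuture_pastCone (ha : a < Ω) (hb : (Ω : EReal) ≤ b) :
    CommonFuture a b (pastCone a b Ω x₀) = futureCone a b Ω x₀ := by
  ext q
  constructor
  · rintro ⟨u, ⟨-, hu⟩, huq⟩
    exact mem_futureCone_of_chron (add_dist_le_of_forall_chron_pastCone ha hb hu) huq
  · intro hq
    obtain ⟨u, hu, hu₁, hu₂⟩ := exists_mem_futureCone_near_apex (x₀ := x₀) ha.le
      (coe_lt_of_mem_futureCone hq) (ε := (q.1 - Ω - dist (q.2 : Completion M) x₀) / 2)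
      (by linarith [hq.2])
    exact ⟨u, ⟨hu.1, fun p hp => chron_of_mem_pastCone hp hu.1 hu.2.le⟩,
      chron_of_add_dist_lt hu.1 hq.1 (by linarith)⟩

theorem commonPast_futureCone (ha : a ≤ Ω) (hb : (Ω : EReal) < b) :
    CommonPast a b (futureCone a b Ω x₀) = pastCone a b Ω x₀ := by
  ext q
  constructor
  · rintro ⟨u, ⟨-, hu⟩, hqu⟩
    exact mem_pastCone_of_chron (le_sub_dist_of_forall_chron_futureCone ha hb hu) hqu
  · intro hq
    obtain ⟨u, hu, hu₁, hu₂⟩ := exists_mem_pastCone_near_apex (x₀ := x₀)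
      (lt_coe_of_mem_pastCone hq) hb.le (ε := (Ω - dist (q.2 : Completion M) x₀ - q.1) / 2)
      (by linarith [hq.2])
    exact ⟨u, ⟨hu.1, fun f hf => chron_of_mem_futureCone hf hu.1 hu.2.le⟩,
      chron_of_add_dist_lt hq.1 hu.1 (by linarith)⟩

theorem pastCone_coe_eq_iminusPt {y : M} (hy : ((Ω, y) : ℝ × M) ∈ Spacetime a b) :
    pastCone a b Ω (y : Completion M) = IminusPt a b (Ω, y) := by
  ext q
  simp only [pastCone, IminusPt, Chron, Completion.dist_eq, mem_ofPred_eq]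
  exact ⟨fun h => ⟨h.1, hy, h.2⟩, fun h => ⟨h.1, h.2.2⟩⟩

theorem exists_chain_futureCone_eq_iplusSet (ha : a ≤ Ω) (hb : (Ω : EReal) < b) :
    ∃ p : ℕ → ℝ × M, (∀ n, Chron a b (p (n + 1)) (p n)) ∧
      futureCone a b Ω x₀ = IplusSet a b (range p) := by
  obtain ⟨r, hΩr, hrb⟩ := EReal.lt_iff_exists_real_btwn.mp hb
  rw [EReal.coe_lt_coe_iff] at hΩr
  set ε : ℕ → ℝ := fun n => (r - Ω) / 3 * (1 / 2) ^ n with hε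
  have hε_pos (n : ℕ) : 0 < ε n := by positivity
  have hε_le (n : ℕ) : ε n ≤ (r - Ω) / 3 :=
    mul_le_of_le_one_right (by linarith) (pow_le_one₀ (by norm_num) (by norm_num))
  have hε_succ (n : ℕ) : ε (n + 1) = ε n / 2 := by simp only [hε, pow_succ]; ring
  have hε_lim : Tendsto ε atTop (𝓝 0) := by
    have := (tendsto_pow_atTop_nhds_zero_of_lt_one (r := (1 / 2 : ℝ)) (by norm_num)
      (by norm_num)).const_mul ((r - Ω) / 3)
    rwa [mul_zero] at this
  choose y hy using fun n => Completion.exists_dist_coe_lt x₀ (hε_pos n)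
  -- the time `Ω + 3 ε n` leaves room for two distances to `x₀` in the chain condition
  set p : ℕ → ℝ × M := fun n => (Ω + 3 * ε n, y n)
  have hp_mem (n : ℕ) : p n ∈ futureCone a b Ω x₀ :=
    ⟨⟨ha.trans_lt (EReal.coe_lt_coe_iff.mpr (by linarith [hε_pos n])),
      (EReal.coe_le_coe_iff.mpr (by linarith [hε_le n])).trans_lt hrb⟩,
      by linarith [hy n, hε_pos n]⟩
  refine ⟨p, fun n => chron_of_add_dist_lt (hp_mem _).1 (hp_mem n).1 (x₀ := x₀) ?_, ?_⟩
  · linarith [hy n, hy (n + 1), hε_succ n]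
  ext q
  constructor
  · intro hq
    have hgap : 0 < (q.1 - Ω - dist (q.2 : Completion M) x₀) / 4 := by linarith [hq.2]
    obtain ⟨n, hn⟩ := (hε_lim.eventually (gt_mem_nhds hgap)).exists
    exact ⟨p n, mem_range_self n, chron_of_add_dist_lt (hp_mem n).1 hq.1 (by linarith [hy n])⟩
  · rintro ⟨-, ⟨n, rfl⟩, hq⟩
    exact mem_futureCone_of_chron (hp_mem n).2.le hq

theorem isIF_futureCone (ha : a ≤ Ω) (hb : (Ω : EReal) < b) : IsIF a b (futureCone a b Ω x₀) := by
  obtain ⟨p, hp, h⟩ := exists_chain_futureCone_eq_iplusSet (x₀ := x₀) ha hb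
  exact h ▸ isIF_iplusSet_range hp

end Cones

section Curves

variable {c : ℝ → M} {w : ℝ} {K : ℝ≥0}

theorem LipschitzOnWith.exists_dist_coe_le {Ω : ℝ} (hwΩ : w < Ω)
    (hc : LipschitzOnWith K c (Ico w Ω)) :
    ∃ x₀ : Completion M, ∀ s ∈ Ico w Ω, dist (c s : Completion M) x₀ ≤ K * (Ω - s) := by
  have := right_nhdsWithin_Ico_neBot hwΩ
  have hc' : LipschitzOnWith K ((↑) ∘ c : ℝ → Completion M) (Ico w Ω) := by
    simpa using Completion.coe_isometry.lipschitz.comp_lipschitzOnWith hc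
  obtain ⟨x₀, hx₀⟩ := CompleteSpace.complete
    (((cauchy_nhds (a := Ω)).mono nhdsWithin_le_nhds).map_of_le hc'.uniformContinuousOn
      inf_le_right)
  refine ⟨x₀, fun s hs => ?_⟩
  refine le_of_tendsto (tendsto_const_nhds.dist hx₀) ?_
  filter_upwards [self_mem_nhdsWithin, nhdsWithin_le_nhds (Ioi_mem_nhds hs.2)] with t ht hst
  calc dist (c s : Completion M) (c t) ≤ K * dist s t := hc'.dist_le_mul s hs t ht
    _ ≤ K * (Ω - s) := by
      gcongr
      rw [Real.dist_eq, abs_of_neg (by linarith [mem_Ioi.mp hst])]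
      linarith [ht.2]

theorem pastOfCurve_Ico_eq_pastCone {Ω : ℝ} (hwΩ : w < Ω) (hw : a < w) (hΩ : (Ω : EReal) ≤ b)
    {L : ℝ} (hL : L ≤ 1) {x₀ : Completion M}
    (hx₀ : ∀ s ∈ Ico w Ω, dist (c s : Completion M) x₀ ≤ L * (Ω - s)) :
    PastOfCurve a b c (Ico w Ω) = pastCone a b Ω x₀ := by
  ext q
  constructor
  · rintro ⟨s, hs, hq, -, hqs⟩
    refine ⟨hq, ?_⟩
    dsimp only at hqs
    have : L * (Ω - s) ≤ Ω - s := mul_le_of_le_one_left (by linarith [hs.2]) hL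
    linarith [hx₀ s hs, dist_coe_sub_dist_coe_le q.2 (c s) x₀]
  · rintro ⟨hq, hqΩ⟩
    have hlim : Tendsto (fun s => s - L * (Ω - s)) (𝓝[<] Ω) (𝓝 Ω) := by
      have : Continuous fun s : ℝ => s - L * (Ω - s) := by fun_prop
      simpa using (this.tendsto Ω).mono_left nhdsWithin_le_nhds
    have hqΩ' : q.1 + dist (q.2 : Completion M) x₀ < Ω := by linarith
    obtain ⟨s, hsΩ, hs⟩ := ((hlim.eventually_const_lt hqΩ').and (Ico_mem_nhdsLT hwΩ)).exists
    refine ⟨s, hs, hq, ⟨hw.trans_le (EReal.coe_le_coe_iff.mpr hs.1),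
      (EReal.coe_lt_coe_iff.mpr hs.2).trans_le hΩ⟩, ?_⟩
    linarith [hx₀ s hs, dist_le_dist_coe_add_dist_coe q.2 (c s) x₀]

theorem spacetime_subset_pastOfCurve_Ici (hw : a < w) (hK : (K : ℝ) < 1)
    (hc : LipschitzOnWith K c (Ici w)) : Spacetime a ⊤ ⊆ PastOfCurve (M := M) a ⊤ c (Ici w) := by
  intro u hu
  have hlim : Tendsto (fun s => (1 - K) * s + (K * w - dist u.2 (c w))) atTop atTop :=
    (tendsto_id.const_mul_atTop (by linarith)).atTop_add tendsto_const_nhds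
  obtain ⟨s, hus, hws⟩ := ((hlim.eventually_gt_atTop u.1).and (eventually_ge_atTop w)).exists
  have hdist : dist (c w) (c s) ≤ K * (s - w) := by
    have := hc.dist_le_mul w self_mem_Ici s hws
    rwa [Real.dist_eq, abs_of_nonpos (by linarith), neg_sub] at this
  refine ⟨s, hws, hu, ⟨hw.trans_le (EReal.coe_le_coe_iff.mpr hws), EReal.coe_lt_top s⟩, ?_⟩
  dsimp only
  linarith [dist_triangle u.2 (c w) (c s)]

theorem commonFuture_eq_empty_of_spacetime_subset {P : Set (ℝ × M)} (h : Spacetime a b ⊆ P) :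
    CommonFuture a b P = ∅ :=
  eq_empty_of_forall_notMem fun _ ⟨u, ⟨hu, huP⟩, _⟩ => not_chron_self u (huP u (h hu))

theorem exists_pastOfCurve_eq_pastCone {Ω₀ : EReal} (hw : a < w) (hΩ₀ : Ω₀ ≤ b)
    (hwΩ₀ : (w : EReal) < Ω₀) (hK : (K : ℝ) < 1)
    (hc : LipschitzOnWith K c {t : ℝ | w ≤ t ∧ (t : EReal) < Ω₀})
    (hne : (CommonFuture a b (PastOfCurve a b c {t : ℝ | w ≤ t ∧ (t : EReal) < Ω₀})).Nonempty) :
    ∃ Ω : ℝ, ∃ x₀ : Completion M, a < Ω ∧ (Ω : EReal) ≤ b ∧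
      PastOfCurve a b c {t : ℝ | w ≤ t ∧ (t : EReal) < Ω₀} = pastCone a b Ω x₀ := by
  induction Ω₀ using EReal.rec with
  | bot => exact absurd hwΩ₀ not_lt_bot
  | top =>
    obtain rfl : b = ⊤ := top_le_iff.mp hΩ₀
    simp only [EReal.coe_lt_top, and_true] at hc hne
    exact (hne.ne_empty <|
      commonFuture_eq_empty_of_spacetime_subset (spacetime_subset_pastOfCurve_Ici hw hK hc)).elim
  | coe Ω =>
    have hwΩ : w < Ω := EReal.coe_lt_coe_iff.mp hwΩ₀
    simp only [EReal.coe_lt_coe_iff] at hc ⊢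
    obtain ⟨x₀, hx₀⟩ := LipschitzOnWith.exists_dist_coe_le hwΩ hc
    exact ⟨Ω, x₀, hw.trans hwΩ₀, hΩ₀, pastOfCurve_Ico_eq_pastCone hwΩ hw hΩ₀ hK.le hx₀⟩

end Curves

end ProductSpacetime

theorem stmt0_general {M : Type*} [MetricSpace M] (a b : EReal)
    -- the future-directed timelike curve γ₊(t) = (t, c₊ t), t ∈ [w, Ω₀) ⊆ I
    (cp : ℝ → M) (w : ℝ) (Ω₀ : EReal)
    (hw : a < (w : EReal)) (hΩ₀ : Ω₀ ≤ b) (hwΩ₀ : (w : EReal) < Ω₀)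
    (Kp : ℝ≥0) (hKp : (Kp : ℝ) < 1)
    (hcp : LipschitzOnWith Kp cp {t : ℝ | w ≤ t ∧ (t : EReal) < Ω₀})
    -- P is a nonempty TIP of the form I⁻[γ₊], F a nonempty TIF of the form I⁺[γ₋]
    (P F : Set (ℝ × M))
    (hP : P = PastOfCurve a b cp {t : ℝ | w ≤ t ∧ (t : EReal) < Ω₀})
    (hPTIP : IsTIP a b P)
    (hFTIF : IsTIF a b F) :
    SRel a b P F ↔
      ∃ x₀ : UniformSpace.Completion M,
        x₀ ∉ Set.range ((↑) : M → UniformSpace.Completion M) ∧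
        ∃ Ω : ℝ, a < (Ω : EReal) ∧ (Ω : EReal) < b ∧
          P = {p : ℝ × M | p ∈ Spacetime a b ∧
                p.1 < Ω - dist (p.2 : UniformSpace.Completion M) x₀} ∧
          F = {p : ℝ × M | p ∈ Spacetime a b ∧
                Ω + dist (p.2 : UniformSpace.Completion M) x₀ < p.1} := by
  constructor
  · rintro ⟨-, hFIF, -, hFsub, -, hFmax⟩
    obtain ⟨Ω, x₀, haΩ, hΩb, hPcone⟩ :=
      exists_pastOfCurve_eq_pastCone hw hΩ₀ hwΩ₀ hKp hcp (hP ▸ hFIF.1.mono hFsub)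
    rw [← hP] at hPcone
    have hCF : CommonFuture a b P = futureCone a b Ω x₀ := hPcone ▸ commonFuture_pastCone haΩ hΩb
    obtain ⟨f, hf⟩ := hFIF.1
    have hΩb' : (Ω : EReal) < b := coe_lt_of_mem_futureCone (hCF ▸ hFsub hf)
    have hFcone : F = futureCone a b Ω x₀ :=
      (hFmax _ (isIF_futureCone haΩ.le hΩb') hCF.ge (hCF ▸ hFsub)).symm
    refine ⟨x₀, ?_, Ω, haΩ, hΩb', hPcone, hFcone⟩
    rintro ⟨y, rfl⟩
    exact hPTIP.2 (Ω, y) ⟨haΩ, hΩb'⟩ (hPcone.trans (pastCone_coe_eq_iminusPt ⟨haΩ, hΩb'⟩))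
  · rintro ⟨x₀, -, Ω, haΩ, hΩb, hPcone, hFcone⟩
    have hCF : CommonFuture a b P = F := by
      rw [hPcone, hFcone]
      exact commonFuture_pastCone haΩ hΩb.le
    have hCP : CommonPast a b F = P := by
      rw [hPcone, hFcone]
      exact commonPast_futureCone haΩ.le hΩb
    exact ⟨hPTIP.1, hFTIF.1, hCP.ge, hCF.ge, fun _ _ h₁ h₂ => (hCP ▸ h₁).antisymm h₂,
      fun _ _ h₁ h₂ => (hCF ▸ h₁).antisymm h₂⟩

/-- For the product spacetime `V = (a,b) × M`, a nonempty TIP `P = I⁻[γ₊]`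
and a nonempty TIF `F = I⁺[γ₋]` (with `γ₊`, `γ₋` future/past-directed timelike curves
parametrized by time) are S-related iff there are `x₀ ∈ ∂_C(M)` (Cauchy boundary, i.e.
`x₀` in the completion but not in `M`) and `Ω ∈ (a,b)` with
`P = {(t',x') : t' < Ω - d(x',x₀)}` and `F = {(t',x') : t' > Ω + d(x',x₀)}`. -/
theorem stmt0 {M : Type*} [MetricSpace M] (a b : EReal) (hab : a < b)
    -- the future-directed timelike curve γ₊(t) = (t, c₊ t), t ∈ [w, Ω₀) ⊆ I
    (cp : ℝ → M) (w : ℝ) (Ω₀ : EReal)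
    (hw : a < (w : EReal)) (hΩ₀ : Ω₀ ≤ b) (hwΩ₀ : (w : EReal) < Ω₀)
    (Kp : ℝ≥0) (hKp : (Kp : ℝ) < 1)
    (hcp : LipschitzOnWith Kp cp {t : ℝ | w ≤ t ∧ (t : EReal) < Ω₀})
    -- the past-directed timelike curve γ₋(t) = (t, c₋ t), t ∈ (Ω₁, w'] ⊆ I
    (cm : ℝ → M) (w' : ℝ) (Ω₁ : EReal)
    (hw' : (w' : EReal) < b) (hΩ₁ : a ≤ Ω₁) (hΩ₁w' : Ω₁ < (w' : EReal))
    (Km : ℝ≥0) (hKm : (Km : ℝ) < 1)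
    (hcm : LipschitzOnWith Km cm {t : ℝ | Ω₁ < (t : EReal) ∧ t ≤ w'})
    -- P is a nonempty TIP of the form I⁻[γ₊], F a nonempty TIF of the form I⁺[γ₋]
    (P F : Set (ℝ × M))
    (hP : P = PastOfCurve a b cp {t : ℝ | w ≤ t ∧ (t : EReal) < Ω₀})
    (hF : F = FutureOfCurve a b cm {t : ℝ | Ω₁ < (t : EReal) ∧ t ≤ w'})
    (hPTIP : IsTIP a b P) (hPne : P.Nonempty)
    (hFTIF : IsTIF a b F) (hFne : F.Nonempty) :
    SRel a b P F ↔
      ∃ x₀ : UniformSpace.Completion M,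
        x₀ ∉ Set.range ((↑) : M → UniformSpace.Completion M) ∧
        ∃ Ω : ℝ, a < (Ω : EReal) ∧ (Ω : EReal) < b ∧
          P = {p : ℝ × M | p ∈ Spacetime a b ∧
                p.1 < Ω - dist (p.2 : UniformSpace.Completion M) x₀} ∧
          F = {p : ℝ × M | p ∈ Spacetime a b ∧
                Ω + dist (p.2 : UniformSpace.Completion M) x₀ < p.1} :=
  stmt0_general a b cp w Ω₀ hw hΩ₀ hwΩ₀ Kp hKp hcp P F hP hPTIP hFTIF
end
end

section
/- Let (M,d) be a metric space and I=(a,b)⊆ℝ a nonempty open interval. Let γ(t)=(t,c(t)), t∈[w,Ω)⊆I, be a future-directed timelike curve in V=I×M, with Busemann function b_c(x)=sup_{t∈[w,Ω)}(t−d(x,c(t))). Then the chronological past of γ is I⁻[γ]={(t',x')∈I×M : t'<b_c(x')}. Dually, for a past-directed timelike curve γ(t)=(t,c(t)), t∈(Ω₁,w'], one has I⁺[γ]={(t',x')∈I×M : t'>inf_{t∈(Ω₁,w']}(t+d(x',c(t)))}. -/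
open Set
open scoped ENNReal NNReal

noncomputable section

section

variable {M : Type*} [MetricSpace M] {a b : EReal}

theorem pastOfCurve_eq_lt_busemann (c : ℝ → M) {D : Set ℝ}
    (hD : ∀ t ∈ D, ((t, c t) : ℝ × M) ∈ Spacetime a b) :
    PastOfCurve a b c D = {p : ℝ × M | p ∈ Spacetime a b ∧ (p.1 : EReal) < Busemann c D p.2} := by
  ext p
  simp only [PastOfCurve, Busemann, lt_sSup_iff]
  constructor
  · rintro ⟨t, ht, hp, -, hlt⟩
    exact ⟨hp, _, ⟨t, ht, rfl⟩, EReal.coe_lt_coe_iff.mpr hlt⟩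
  · rintro ⟨hp, _, ⟨t, ht, rfl⟩, hlt⟩
    exact ⟨t, ht, hp, hD t ht, EReal.coe_lt_coe_iff.mp hlt⟩

theorem futureOfCurve_eq_sInf_lt (c : ℝ → M) {D : Set ℝ}
    (hD : ∀ t ∈ D, ((t, c t) : ℝ × M) ∈ Spacetime a b) :
    FutureOfCurve a b c D = {p : ℝ × M | p ∈ Spacetime a b ∧
      sInf {y : EReal | ∃ t ∈ D, y = ((t + dist p.2 (c t) : ℝ) : EReal)} < (p.1 : EReal)} := by
  ext p
  simp only [FutureOfCurve, sInf_lt_iff]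
  constructor
  · rintro ⟨t, ht, -, hp, hlt⟩
    refine ⟨hp, _, ⟨t, ht, rfl⟩, EReal.coe_lt_coe_iff.mpr ?_⟩
    rw [dist_comm]
    linarith
  · rintro ⟨hp, _, ⟨t, ht, rfl⟩, hlt⟩
    refine ⟨t, ht, hD t ht, hp, ?_⟩
    rw [dist_comm]
    linarith [EReal.coe_lt_coe_iff.mp hlt]

end

theorem stmt3_general {M : Type*} [MetricSpace M] (a b : EReal)
    -- the future-directed timelike curve γ(t) = (t, c t), t ∈ [w, Ω) ⊆ I
    (c : ℝ → M) (w : ℝ) (Ω : EReal)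
    (hw : a < (w : EReal)) (hΩ : Ω ≤ b)
    -- the past-directed timelike curve γ'(t) = (t, c' t), t ∈ (Ω₁, w'] ⊆ I
    (c' : ℝ → M) (w' : ℝ) (Ω₁ : EReal)
    (hw' : (w' : EReal) < b) (hΩ₁ : a ≤ Ω₁) :
    PastOfCurve a b c {t : ℝ | w ≤ t ∧ (t : EReal) < Ω} =
      {p : ℝ × M | p ∈ Spacetime a b ∧
        ((p.1 : ℝ) : EReal) < Busemann c {t : ℝ | w ≤ t ∧ (t : EReal) < Ω} p.2} ∧
    FutureOfCurve a b c' {t : ℝ | Ω₁ < (t : EReal) ∧ t ≤ w'} =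
      {p : ℝ × M | p ∈ Spacetime a b ∧
        sInf {y : EReal | ∃ t ∈ {t : ℝ | Ω₁ < (t : EReal) ∧ t ≤ w'},
            y = ((t + dist p.2 (c' t) : ℝ) : EReal)} < ((p.1 : ℝ) : EReal)} := by
  refine ⟨pastOfCurve_eq_lt_busemann c fun t ht => ⟨?_, ?_⟩,
    futureOfCurve_eq_sInf_lt c' fun t ht => ⟨?_, ?_⟩⟩
  · exact hw.trans_le (EReal.coe_le_coe_iff.mpr ht.1)
  · exact ht.2.trans_le hΩ
  · exact hΩ₁.trans_lt ht.1
  · exact (EReal.coe_le_coe_iff.mpr ht.2).trans_lt hw'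

/-- For a future-directed timelike curve `γ(t) = (t, c t)`, `t ∈ [w,Ω) ⊆ I`,
the chronological past is `I⁻[γ] = {(t',x') ∈ I×M : t' < b_c(x')}` where
`b_c(x) = sup_{t∈[w,Ω)} (t - d(x, c t))`.  Dually, for a past-directed timelike curve
`γ'(t) = (t, c' t)`, `t ∈ (Ω₁,w'] ⊆ I`, one has
`I⁺[γ'] = {(t',x') ∈ I×M : t' > inf_{t∈(Ω₁,w']} (t + d(x', c' t))}`. -/
theorem stmt3 {M : Type*} [MetricSpace M] (a b : EReal) (hab : a < b)
    -- the future-directed timelike curve γ(t) = (t, c t), t ∈ [w, Ω) ⊆ I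
    (c : ℝ → M) (w : ℝ) (Ω : EReal)
    (hw : a < (w : EReal)) (hΩ : Ω ≤ b) (hwΩ : (w : EReal) < Ω)
    (K : ℝ≥0) (hK : (K : ℝ) < 1)
    (hc : LipschitzOnWith K c {t : ℝ | w ≤ t ∧ (t : EReal) < Ω})
    -- the past-directed timelike curve γ'(t) = (t, c' t), t ∈ (Ω₁, w'] ⊆ I
    (c' : ℝ → M) (w' : ℝ) (Ω₁ : EReal)
    (hw' : (w' : EReal) < b) (hΩ₁ : a ≤ Ω₁) (hΩ₁w' : Ω₁ < (w' : EReal))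
    (K' : ℝ≥0) (hK' : (K' : ℝ) < 1)
    (hc' : LipschitzOnWith K' c' {t : ℝ | Ω₁ < (t : EReal) ∧ t ≤ w'}) :
    PastOfCurve a b c {t : ℝ | w ≤ t ∧ (t : EReal) < Ω} =
      {p : ℝ × M | p ∈ Spacetime a b ∧
        ((p.1 : ℝ) : EReal) < Busemann c {t : ℝ | w ≤ t ∧ (t : EReal) < Ω} p.2} ∧
    FutureOfCurve a b c' {t : ℝ | Ω₁ < (t : EReal) ∧ t ≤ w'} =
      {p : ℝ × M | p ∈ Spacetime a b ∧
        sInf {y : EReal | ∃ t ∈ {t : ℝ | Ω₁ < (t : EReal) ∧ t ≤ w'},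
            y = ((t + dist p.2 (c' t) : ℝ) : EReal)} < ((p.1 : ℝ) : EReal)} :=
  stmt3_general a b c w Ω hw hΩ c' w' Ω₁ hw' hΩ₁
end
end

section
/- Let (M,d) be a length space: for all x,y∈M and ε>0 there exists a Lipschitz curve σ:[0,1]→M from x to y whose length (total variation) is at most d(x,y)+ε. Let I⊆ℝ be an interval and (t₀,x₀),(t₁,x₁)∈I×M. Then the following are equivalent: (i) t₀<t₁−d(x₀,x₁); (ii) t₀<t₁ and there exist a constant K<1 and a K-Lipschitz curve c:[t₀,t₁]→M with c(t₀)=x₀ and c(t₁)=x₁. -/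
open Set
open scoped ENNReal NNReal

/-!
Reverse direction: `d(x₀, x₁) ≤ K (t₁ - t₀) < t₁ - t₀`. Forward direction: pick a Lipschitz
curve from `x₀` to `x₁` of length `ℓ ≤ d(x₀, x₁) + ε < t₁ - t₀`. Its arc-length parametrization
is `1`-Lipschitz on `[0, ℓ]`, and precomposing it with the affine map `[t₀, t₁] → [0, ℓ]` gives
a curve with Lipschitz constant `ℓ / (t₁ - t₀) < 1`.
-/

theorem Real.edist_eq_ofReal_sub {x y : ℝ} (h : x ≤ y) :
    edist x y = ENNReal.ofReal (y - x) := by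
  rw [edist_dist, Real.dist_eq, abs_sub_comm, abs_of_nonneg (sub_nonneg.2 h)]

section

variable {E : Type*} [PseudoEMetricSpace E] {f : ℝ → E} {s : Set ℝ}

theorem HasConstantSpeedOnWith.lipschitzOnWith {l : ℝ≥0} (hf : HasConstantSpeedOnWith f s l) :
    LipschitzOnWith l f s := by
  intro x hx y hy
  wlog hxy : x ≤ y generalizing x y
  · rw [edist_comm, edist_comm x]; exact this hy hx (le_of_not_ge hxy)
  calc edist (f x) (f y) ≤ eVariationOn f (s ∩ Icc x y) :=
        eVariationOn.edist_le f ⟨hx, le_rfl, hxy⟩ ⟨hy, hxy, le_rfl⟩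
    _ = l * edist x y := by
        rw [hf hx hy, ENNReal.ofReal_mul l.coe_nonneg, Real.edist_eq_ofReal_sub hxy,
          ENNReal.ofReal_coe_nnreal]

theorem LipschitzOnWith.eVariationOn_inter_Icc_le {K : ℝ≥0} (hf : LipschitzOnWith K f s)
    {x y : ℝ} (hx : x ∈ s) (hy : y ∈ s) :
    eVariationOn f (s ∩ Icc x y) ≤ K * ENNReal.ofReal (y - x) :=
  calc eVariationOn (f ∘ id) (s ∩ Icc x y) ≤ K * eVariationOn id (s ∩ Icc x y) :=
        hf.comp_eVariationOn_le fun _ hz => hz.1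
    _ = K * ENNReal.ofReal (y - x) := by rw [monotoneOn_id.eVariationOn_eq hx hy, id, id]

theorem lipschitzOnWith_variationOnFromTo {K : ℝ≥0} (hf : LipschitzOnWith K f s) {a : ℝ}
    (ha : a ∈ s) : LipschitzOnWith K (variationOnFromTo f s a) s := by
  intro x hx y hy
  wlog hxy : x ≤ y generalizing x y
  · rw [edist_comm, edist_comm x]; exact this hy hx (le_of_not_ge hxy)
  have hbv := hf.locallyBoundedVariationOn
  have hincr : variationOnFromTo f s a y - variationOnFromTo f s a x =
      variationOnFromTo f s x y := by
    linarith [variationOnFromTo.add hbv ha hx hy]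
  rw [Real.edist_eq_ofReal_sub (variationOnFromTo.monotoneOn hbv ha hx hy hxy), hincr,
    variationOnFromTo.eq_of_le f s hxy, ENNReal.ofReal_toReal (hbv x y hx hy),
    Real.edist_eq_ofReal_sub hxy]
  exact hf.eVariationOn_inter_Icc_le hx hy

end

section

variable {E : Type*} [EMetricSpace E] {f : ℝ → E} {K : ℝ≥0} {a b : ℝ}

theorem LipschitzOnWith.exists_unitSpeed_Icc (hab : a ≤ b) (hf : LipschitzOnWith K f (Icc a b)) :
    ∃ γ : ℝ → E, LipschitzOnWith 1 γ (Icc 0 (eVariationOn f (Icc a b)).toReal) ∧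
      γ 0 = f a ∧ γ (eVariationOn f (Icc a b)).toReal = f b := by
  have ha : a ∈ Icc a b := left_mem_Icc.2 hab
  have hb : b ∈ Icc a b := right_mem_Icc.2 hab
  have hbv := hf.locallyBoundedVariationOn
  have hVa : variationOnFromTo f (Icc a b) a a = 0 := variationOnFromTo.self f _ a
  have hVb : variationOnFromTo f (Icc a b) a b = (eVariationOn f (Icc a b)).toReal := by
    rw [variationOnFromTo.eq_of_le f _ hab, inter_self]
  have hγ (x : ℝ) (hx : x ∈ Icc a b) :
      naturalParameterization f (Icc a b) a (variationOnFromTo f (Icc a b) a x) = f x :=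
    edist_eq_zero.1 (edist_naturalParameterization_eq_zero hbv ha hx)
  have himage : Icc 0 (eVariationOn f (Icc a b)).toReal ⊆
      variationOnFromTo f (Icc a b) a '' Icc a b := by
    simpa only [hVa, hVb] using
      intermediate_value_Icc hab (lipschitzOnWith_variationOnFromTo hf ha).continuousOn
  refine ⟨naturalParameterization f (Icc a b) a, ?_, ?_, ?_⟩
  · exact (HasConstantSpeedOnWith.lipschitzOnWith
      (has_unit_speed_naturalParameterization f hbv ha)).mono himage
  · rw [← hVa, hγ a ha]
  · rw [← hVb, hγ b hb]

theorem LipschitzOnWith.exists_lipschitzOnWith_Icc_of_eVariationOn_le (hab : a ≤ b)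
    (hf : LipschitzOnWith K f (Icc a b)) {t₀ t₁ : ℝ} (ht : t₀ < t₁) {L : ℝ≥0}
    (hL : (eVariationOn f (Icc a b)).toReal ≤ L * (t₁ - t₀)) :
    ∃ c : ℝ → E, LipschitzOnWith L c (Icc t₀ t₁) ∧ c t₀ = f a ∧ c t₁ = f b := by
  obtain ⟨γ, hγ, hγa, hγb⟩ := hf.exists_unitSpeed_Icc hab
  set ℓ := (eVariationOn f (Icc a b)).toReal
  set k := ℓ / (t₁ - t₀)
  have hT : 0 < t₁ - t₀ := sub_pos.2 ht
  have hk : 0 ≤ k := div_nonneg ENNReal.toReal_nonneg hT.le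
  have hkL : k ≤ L := (div_le_iff₀ hT).2 hL
  have hkT : k * (t₁ - t₀) = ℓ := div_mul_cancel₀ ℓ hT.ne'
  have hφ : LipschitzWith L fun t => k * (t - t₀) := LipschitzWith.of_dist_le_mul fun x y => by
    rw [Real.dist_eq, Real.dist_eq, ← mul_sub, sub_sub_sub_cancel_right, abs_mul,
      abs_of_nonneg hk]
    gcongr
  have hmaps : MapsTo (fun t => k * (t - t₀)) (Icc t₀ t₁) (Icc 0 ℓ) := fun t ht =>
    ⟨mul_nonneg hk (sub_nonneg.2 ht.1),
      hkT ▸ mul_le_mul_of_nonneg_left (by linarith [ht.2]) hk⟩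
  refine ⟨γ ∘ fun t => k * (t - t₀), by simpa using hγ.comp hφ.lipschitzOnWith hmaps, ?_, ?_⟩
  · simp [hγa]
  · simp [hkT, hγb]

end

theorem stmt4_general {M : Type*} [MetricSpace M]
    (hlength : ∀ x y : M, ∀ ε : ℝ, 0 < ε → ∃ σ : ℝ → M,
      (∃ K : ℝ≥0, LipschitzOnWith K σ (Set.Icc (0 : ℝ) 1)) ∧ σ 0 = x ∧ σ 1 = y ∧
        eVariationOn σ (Set.Icc (0 : ℝ) 1) ≤ ENNReal.ofReal (dist x y + ε))
    (t₀ t₁ : ℝ) (x₀ x₁ : M) :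
    t₀ < t₁ - dist x₀ x₁ ↔
      t₀ < t₁ ∧ ∃ K : ℝ≥0, (K : ℝ) < 1 ∧ ∃ c : ℝ → M,
        LipschitzOnWith K c (Set.Icc t₀ t₁) ∧ c t₀ = x₀ ∧ c t₁ = x₁ := by
  constructor
  · intro h
    have ht : t₀ < t₁ := by linarith [dist_nonneg (x := x₀) (y := x₁)]
    have hT : 0 < t₁ - t₀ := sub_pos.2 ht
    obtain ⟨ε, hε, hεT⟩ : ∃ ε, 0 < ε ∧ dist x₀ x₁ + ε < t₁ - t₀ :=
      ⟨(t₁ - t₀ - dist x₀ x₁) / 2, by linarith, by linarith⟩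
    obtain ⟨σ, ⟨K₀, hσ⟩, hσ0, hσ1, hσlen⟩ := hlength x₀ x₁ ε hε
    have hdε : 0 ≤ dist x₀ x₁ + ε := add_nonneg dist_nonneg hε.le
    set K := ((dist x₀ x₁ + ε) / (t₁ - t₀)).toNNReal
    have hKT : (K : ℝ) * (t₁ - t₀) = dist x₀ x₁ + ε := by
      rw [Real.coe_toNNReal _ (div_nonneg hdε hT.le), div_mul_cancel₀ _ hT.ne']
    have hK : (K : ℝ) < 1 := (mul_lt_iff_lt_one_left hT).1 (hKT ▸ hεT)
    have hlen : (eVariationOn σ (Icc 0 1)).toReal ≤ K * (t₁ - t₀) :=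
      hKT ▸ ENNReal.toReal_le_of_le_ofReal hdε hσlen
    obtain ⟨c, hc, hc0, hc1⟩ :=
      hσ.exists_lipschitzOnWith_Icc_of_eVariationOn_le zero_le_one ht hlen
    exact ⟨ht, K, hK, c, hc, hc0.trans hσ0, hc1.trans hσ1⟩
  · rintro ⟨ht, K, hK, c, hc, rfl, rfl⟩
    have hd := hc.dist_le_mul t₀ ⟨le_rfl, ht.le⟩ t₁ ⟨ht.le, le_rfl⟩
    rw [Real.dist_eq, abs_sub_comm, abs_of_pos (sub_pos.2 ht)] at hd
    nlinarith

/-- Let `(M,d)` be a length space: for all `x, y ∈ M` and `ε > 0` there is a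
Lipschitz curve `σ : [0,1] → M` from `x` to `y` whose length (total variation) is at most
`d(x,y) + ε`. Let `I ⊆ ℝ` be an interval and `(t₀,x₀), (t₁,x₁) ∈ I × M`. Then
`t₀ < t₁ - d(x₀,x₁)` iff `t₀ < t₁` and there are `K < 1` and a `K`-Lipschitz curve
`c : [t₀,t₁] → M` with `c t₀ = x₀` and `c t₁ = x₁`. -/
theorem stmt4 {M : Type*} [MetricSpace M]
    (hlength : ∀ x y : M, ∀ ε : ℝ, 0 < ε → ∃ σ : ℝ → M,
      (∃ K : ℝ≥0, LipschitzOnWith K σ (Set.Icc (0 : ℝ) 1)) ∧ σ 0 = x ∧ σ 1 = y ∧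
        eVariationOn σ (Set.Icc (0 : ℝ) 1) ≤ ENNReal.ofReal (dist x y + ε))
    (I : Set ℝ) (hI : I.OrdConnected)
    (t₀ t₁ : ℝ) (x₀ x₁ : M) (ht₀ : t₀ ∈ I) (ht₁ : t₁ ∈ I) :
    t₀ < t₁ - dist x₀ x₁ ↔
      t₀ < t₁ ∧ ∃ K : ℝ≥0, (K : ℝ) < 1 ∧ ∃ c : ℝ → M,
        LipschitzOnWith K c (Set.Icc t₀ t₁) ∧ c t₀ = x₀ ∧ c t₁ = x₁ :=
  stmt4_general hlength t₀ t₁ x₀ x₁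
end

section
/- Let (M,d) be a metric space with completion \bar M_C (extended distance also denoted d). If Ω,Ω'∈ℝ and x₀,x₀'∈\bar M_C satisfy Ω−d(x,x₀)=Ω'−d(x,x₀') for every x∈M, then Ω=Ω' and x₀=x₀'. Consequently, for fixed interval I=(a,b), a set of the form {(t',x')∈I×M : t'<Ω−d(x',x₀)} with Ω∈(a,b) determines the pair (Ω,x₀) uniquely. -/
/-!
Both conjuncts reduce to one fact: if `max a (Ω - d(·, x₀))` and `max a (Ω' - d(·, x₀'))` agree
on a dense subset, with `a < Ω` and `a < Ω'`, they agree everywhere by continuity; evaluating at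
`x₀` and at `x₀'` gives `Ω = Ω' - d(x₀, x₀')` and `Ω' = Ω - d(x₀, x₀')`, so `d(x₀, x₀') = 0`.
For the first conjunct take `a = ⊥`. For the second, the time slice of the set over `x ∈ M` is
the real interval `(a, min(b, Ω - d(x, x₀)))`, and the cap at `b` is inactive since
`Ω - d(x, x₀) ≤ Ω < b`, so equal sets have equal `max a (Ω - d(x, x₀))`.
-/

open Set

noncomputable section

theorem EReal.max_le_max_of_forall_coe_lt {a c c' : EReal}
    (h : ∀ t : ℝ, a < t → (t : EReal) < c → (t : EReal) < c') : max a c ≤ max a c' := by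
  by_contra! hlt
  have hc : max a c' < c := by
    rcases lt_max_iff.mp hlt with ha | hc
    · exact absurd ha (le_max_left a c').not_gt
    · exact hc
  obtain ⟨t, hmax, htc⟩ := EReal.lt_iff_exists_real_btwn.mp hc
  obtain ⟨hat, hc't⟩ := max_lt_iff.mp hmax
  exact (h t hat htc).not_gt hc't

theorem eq_of_forall_max_sub_dist_eq {X : Type*} [MetricSpace X] {a : EReal} {Ω Ω' : ℝ}
    {x₀ x₀' : X} (ha : a < Ω) (ha' : a < Ω')
    (h : ∀ x, max a ((Ω - dist x x₀ : ℝ) : EReal) = max a ((Ω' - dist x x₀' : ℝ) : EReal)) :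
    Ω = Ω' ∧ x₀ = x₀' := by
  have coe_eq_of_max_eq {r s : ℝ} (hr : a < r) (hrs : max a (s : EReal) = r) : s = r := by
    rcases max_choice a (s : EReal) with hmax | hmax
    · exact absurd (hmax ▸ hrs) hr.ne
    · exact_mod_cast hmax ▸ hrs
  have at_x₀ : Ω' - dist x₀ x₀' = Ω :=
    coe_eq_of_max_eq ha (by simpa [max_eq_right ha.le] using (h x₀).symm)
  have at_x₀' : Ω - dist x₀' x₀ = Ω' :=
    coe_eq_of_max_eq ha' (by simpa [max_eq_right ha'.le] using h x₀')
  have hd : dist x₀ x₀' = 0 := by linarith [dist_comm x₀ x₀', dist_nonneg (x := x₀) (y := x₀')]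
  exact ⟨by linarith, dist_eq_zero.mp hd⟩

theorem DenseRange.eq_of_forall_max_sub_dist_eq {M X : Type*} [MetricSpace X] {f : M → X}
    (hf : DenseRange f) {a : EReal} {Ω Ω' : ℝ} {x₀ x₀' : X} (ha : a < Ω) (ha' : a < Ω')
    (h : ∀ x, max a ((Ω - dist (f x) x₀ : ℝ) : EReal) =
      max a ((Ω' - dist (f x) x₀' : ℝ) : EReal)) :
    Ω = Ω' ∧ x₀ = x₀' := by
  have hcont (Ω : ℝ) (x₀ : X) : Continuous fun y => max a ((Ω - dist y x₀ : ℝ) : EReal) :=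
    continuous_const.max <| continuous_coe_real_ereal.comp <|
      continuous_const.sub (continuous_id.dist continuous_const)
  have hext := hf.equalizer (hcont Ω x₀) (hcont Ω' x₀') (funext h)
  exact _root_.eq_of_forall_max_sub_dist_eq ha ha' (congrFun hext)

theorem max_sub_dist_le_of_subset {M X : Type*} [MetricSpace M] [PseudoMetricSpace X]
    {f : M → X} {a b : EReal} {Ω Ω' : ℝ} {x₀ x₀' : X} (hΩb : (Ω : EReal) ≤ b)
    (hsub : {p : ℝ × M | p ∈ Spacetime a b ∧ p.1 < Ω - dist (f p.2) x₀} ⊆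
      {p : ℝ × M | p ∈ Spacetime a b ∧ p.1 < Ω' - dist (f p.2) x₀'}) (x : M) :
    max a ((Ω - dist (f x) x₀ : ℝ) : EReal) ≤ max a ((Ω' - dist (f x) x₀' : ℝ) : EReal) := by
  refine EReal.max_le_max_of_forall_coe_lt fun t hat htc => ?_
  have htc : t < Ω - dist (f x) x₀ := EReal.coe_lt_coe_iff.mp htc
  have htb : (t : EReal) < b :=
    lt_of_lt_of_le (EReal.coe_lt_coe_iff.mpr (by linarith [dist_nonneg (x := f x) (y := x₀)])) hΩb
  exact EReal.coe_lt_coe_iff.mpr (hsub (a := (t, x)) ⟨⟨hat, htb⟩, htc⟩).2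

/-- If `Ω, Ω' ∈ ℝ` and `x₀, x₀'` in the completion of `M` satisfy
`Ω - d(x,x₀) = Ω' - d(x,x₀')` for every `x ∈ M`, then `Ω = Ω'` and `x₀ = x₀'`.
Consequently, for a fixed interval `I = (a,b)`, a set of the form
`{(t',x') ∈ I×M : t' < Ω - d(x',x₀)}` with `Ω ∈ (a,b)` determines `(Ω,x₀)` uniquely. -/
theorem stmt10 {M : Type*} [MetricSpace M] (a b : EReal) :
    (∀ (Ω Ω' : ℝ) (x₀ x₀' : UniformSpace.Completion M),
      (∀ x : M, Ω - dist (x : UniformSpace.Completion M) x₀ =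
        Ω' - dist (x : UniformSpace.Completion M) x₀') → Ω = Ω' ∧ x₀ = x₀') ∧
    (∀ (Ω Ω' : ℝ) (x₀ x₀' : UniformSpace.Completion M),
      a < (Ω : EReal) → (Ω : EReal) < b → a < (Ω' : EReal) → (Ω' : EReal) < b →
      {p : ℝ × M | p ∈ Spacetime a b ∧
          p.1 < Ω - dist (p.2 : UniformSpace.Completion M) x₀} =
        {p : ℝ × M | p ∈ Spacetime a b ∧
          p.1 < Ω' - dist (p.2 : UniformSpace.Completion M) x₀'} →
      Ω = Ω' ∧ x₀ = x₀') := by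
  have hdense := UniformSpace.Completion.denseRange_coe (α := M)
  refine ⟨fun Ω Ω' x₀ x₀' h => ?_, fun Ω Ω' x₀ x₀' haΩ hΩb haΩ' hΩ'b hset => ?_⟩
  · exact hdense.eq_of_forall_max_sub_dist_eq (a := ⊥) (EReal.bot_lt_coe Ω)
      (EReal.bot_lt_coe Ω') fun x => by rw [max_bot_left, max_bot_left, h x]
  · exact hdense.eq_of_forall_max_sub_dist_eq haΩ haΩ' fun x =>
      le_antisymm (max_sub_dist_le_of_subset hΩb.le hset.subset x)
        (max_sub_dist_le_of_subset hΩ'b.le hset.symm.subset x)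
end
end

section
/- Let (M,d) be a metric space, I=(a,∞) with a∈ℝ∪{−∞}, β:M→ℝ a function, and k>0. Set P={(t',x')∈I×M : t'<β(x')} and P'={(t',x')∈I×M : t'<β(x')+k}, and suppose P≠∅. Then P⊊P' (strict inclusion). Consequently, the boundary pairs (P,∅) and (P',∅) are causally related but not chronologically related, i.e. they are horismotically related. -/
open Set

noncomputable section

/-- Pairs `(P,F)` and `(P',F')` of the causal completion are chronologically related
if `F ∩ P' ≠ ∅`. -/
def PairChron {M : Type*} [MetricSpace M] (P F P' F' : Set (ℝ × M)) : Prop :=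
  (F ∩ P').Nonempty

/-- Pairs `(P,F)` and `(P',F')` of the causal completion are causally related
if `P ⊆ P'` and `F' ⊆ F`. -/
def PairCausal {M : Type*} [MetricSpace M] (P F P' F' : Set (ℝ × M)) : Prop :=
  P ⊆ P' ∧ F' ⊆ F

/-- Pairs are horismotically related if they are causally but not chronologically related. -/
def PairHoris {M : Type*} [MetricSpace M] (P F P' F' : Set (ℝ × M)) : Prop :=
  PairCausal P F P' F' ∧ ¬ PairChron P F P' F'

section PastBoundaryPairs

variable {M : Type*} [MetricSpace M] {P P' F' : Set (ℝ × M)}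

theorem not_pairChron_empty_left : ¬ PairChron P ∅ P' F' := by
  rintro ⟨y, hy, -⟩
  exact hy

theorem pairCausal_empty_of_subset (h : P ⊆ P') : PairCausal P ∅ P' ∅ :=
  ⟨h, subset_rfl⟩

theorem pairHoris_empty_of_subset (h : P ⊆ P') : PairHoris P ∅ P' ∅ :=
  ⟨pairCausal_empty_of_subset h, not_pairChron_empty_left⟩

end PastBoundaryPairs

theorem mk_mem_spacetime_top_of_le {M : Type*} [MetricSpace M] {a : EReal} {p : ℝ × M}
    (hp : p ∈ Spacetime a ⊤) {t : ℝ} (ht : p.1 ≤ t) : (t, p.2) ∈ Spacetime a ⊤ :=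
  ⟨hp.1.trans_le (EReal.coe_le_coe_iff.mpr ht), EReal.coe_lt_top t⟩

/-- The point `(β x, x)` lies in the larger set but not the smaller one; it lies in the
spacetime because `I = (a, ∞)` is unbounded above. -/
theorem setOf_lt_ssubset_setOf_lt_add {M : Type*} [MetricSpace M] {a : EReal} {β : M → ℝ}
    {k : ℝ} (hk : 0 < k) (hne : {p : ℝ × M | p ∈ Spacetime a ⊤ ∧ p.1 < β p.2}.Nonempty) :
    {p : ℝ × M | p ∈ Spacetime a ⊤ ∧ p.1 < β p.2} ⊂
      {p : ℝ × M | p ∈ Spacetime a ⊤ ∧ p.1 < β p.2 + k} := by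
  obtain ⟨p, hpV, hpβ⟩ := hne
  refine ssubset_of_subset_not_subset (fun q hq => ⟨hq.1, by linarith [hq.2]⟩) fun hsub => ?_
  have hwitness : (β p.2, p.2) ∈ {p : ℝ × M | p ∈ Spacetime a ⊤ ∧ p.1 < β p.2 + k} :=
    ⟨mk_mem_spacetime_top_of_le hpV hpβ.le, by simpa using hk⟩
  exact lt_irrefl _ (hsub hwitness).2

/-- For `I = (a,∞)`, `β : M → ℝ` and `k > 0`, the sets
`P = {(t',x') ∈ I×M : t' < β(x')}` and `P' = {(t',x') ∈ I×M : t' < β(x') + k}` satisfy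
`P ⊊ P'` whenever `P ≠ ∅`; consequently the boundary pairs `(P,∅)` and `(P',∅)` are
causally but not chronologically related, i.e. horismotically related. -/
theorem stmt11 {M : Type*} [MetricSpace M] (a : EReal) (β : M → ℝ) (k : ℝ) (hk : 0 < k)
    (P P' : Set (ℝ × M))
    (hP : P = {p : ℝ × M | p ∈ Spacetime a ⊤ ∧ p.1 < β p.2})
    (hP' : P' = {p : ℝ × M | p ∈ Spacetime a ⊤ ∧ p.1 < β p.2 + k})
    (hne : P.Nonempty) :
    P ⊂ P' ∧ PairCausal P ∅ P' ∅ ∧ ¬ PairChron P ∅ P' ∅ ∧ PairHoris P ∅ P' ∅ := by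
  subst hP hP'
  have hssub := setOf_lt_ssubset_setOf_lt_add hk hne
  exact ⟨hssub, pairCausal_empty_of_subset hssub.subset, not_pairChron_empty_left,
    pairHoris_empty_of_subset hssub.subset⟩
end
end

section
/- Let (M,d) be a metric space with completion \bar M_C, I=(a,b)⊆ℝ a nonempty open interval, x₀∈\bar M_C, and Ω,Ω'∈ℝ with a≤Ω<Ω'≤b. Set F={(t',x')∈I×M : t'>Ω+d(x',x₀)} and P'={(t',x')∈I×M : t'<Ω'−d(x',x₀)}. Then F∩P'≠∅. Consequently, the boundary pairs (P,F) and (P',F') based at x₀ with times Ω<Ω' are chronologically related. -/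
open Set

noncomputable section

lemma mk_mem_spacetime {M : Type*} [MetricSpace M] {a b : EReal} {Ω Ω' t : ℝ} (x : M)
    (ha : a ≤ (Ω : EReal)) (hb : (Ω' : EReal) ≤ b) (hΩt : Ω < t) (htΩ' : t < Ω') :
    (t, x) ∈ Spacetime a b :=
  ⟨ha.trans_lt (EReal.coe_lt_coe hΩt), (EReal.coe_lt_coe htΩ').trans_le hb⟩

/-- For `x₀` in the completion of `M` and `a ≤ Ω < Ω' ≤ b`, the sets
`F = {(t',x') ∈ I×M : t' > Ω + d(x',x₀)}` and `P' = {(t',x') ∈ I×M : t' < Ω' - d(x',x₀)}`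
satisfy `F ∩ P' ≠ ∅`; consequently any boundary pairs `(P,F)` and `(P',F')` based at `x₀`
with times `Ω < Ω'` are chronologically related. -/
theorem stmt12 {M : Type*} [MetricSpace M] (a b : EReal)
    (x₀ : UniformSpace.Completion M) (Ω Ω' : ℝ)
    (ha : a ≤ (Ω : EReal)) (hΩΩ' : Ω < Ω') (hb : (Ω' : EReal) ≤ b)
    (F P' : Set (ℝ × M))
    (hF : F = {p : ℝ × M | p ∈ Spacetime a b ∧
      Ω + dist (p.2 : UniformSpace.Completion M) x₀ < p.1})
    (hP' : P' = {p : ℝ × M | p ∈ Spacetime a b ∧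
      p.1 < Ω' - dist (p.2 : UniformSpace.Completion M) x₀}) :
    (F ∩ P').Nonempty ∧ ∀ P F' : Set (ℝ × M), PairChron P F P' F' := by
  have hne : (F ∩ P').Nonempty := by
    obtain ⟨x, hx⟩ := Metric.denseRange_iff.1 UniformSpace.Completion.denseRange_coe x₀
      ((Ω' - Ω) / 2) (by linarith)
    rw [dist_comm] at hx
    have hd := dist_nonneg (x := (x : UniformSpace.Completion M)) (y := x₀)
    have hmem := mk_mem_spacetime (t := (Ω + Ω') / 2) x ha hb (by linarith) (by linarith)
    subst hF hP'
    exact ⟨((Ω + Ω') / 2, x), ⟨hmem, by dsimp only; linarith⟩, ⟨hmem, by dsimp only; linarith⟩⟩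
  exact ⟨hne, fun _ _ => hne⟩
end
end

section
/- Let (M,d) be a metric space with completion \bar M_C, and I=(a,b) with −∞≤a<b<+∞. Let x₀,x₀'∈\bar M_C with x₀≠x₀', and set P={(t',x')∈I×M : t'<b−d(x',x₀)} and P'={(t',x')∈I×M : t'<b−d(x',x₀')}. Then P⊄P' and P'⊄P. Consequently, the corresponding boundary pairs (P,∅) and (P',∅) are not causally related. -/
/-! A point `x` of `M` close enough to `x₀` is nearer to `x₀` than to `x₀'` and has
`b - d(x, x₀) > a`; any time `t` between `max a (b - d(x, x₀'))` and `b - d(x, x₀)` then gives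
an event `(t, x)` of `P` outside `P'`. -/

open Set

noncomputable section

theorem DenseRange.exists_dist_lt_and_dist_lt_dist {α X : Type*} [MetricSpace X] {ι : α → X}
    (hι : DenseRange ι) {x₀ x₀' : X} (hne : x₀ ≠ x₀') {ε : ℝ} (hε : 0 < ε) :
    ∃ x, dist (ι x) x₀ < ε ∧ dist (ι x) x₀ < dist (ι x) x₀' := by
  have hopen : IsOpen {z : X | dist z x₀ < ε ∧ dist z x₀ < dist z x₀'} :=
    (isOpen_lt (continuous_id.dist continuous_const) continuous_const).inter
      (isOpen_lt (continuous_id.dist continuous_const) (continuous_id.dist continuous_const))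
  exact hι.exists_mem_open hopen ⟨x₀, by simpa using ⟨hε, hne⟩⟩

section

variable {M X : Type*} [MetricSpace M] [MetricSpace X]

/-- The past of the boundary point `(b, x₀)`; in the paper `ι` is the inclusion `M → \bar M_C`. -/
def distPast (a : EReal) (b : ℝ) (ι : M → X) (x₀ : X) : Set (ℝ × M) :=
  {p | p ∈ Spacetime a (b : EReal) ∧ p.1 < b - dist (ι p.2) x₀}

theorem distPast_not_subset {a : EReal} {b : ℝ} (hab : a < b) {ι : M → X} (hι : DenseRange ι)
    {x₀ x₀' : X} (hne : x₀ ≠ x₀') : ¬ distPast a b ι x₀ ⊆ distPast a b ι x₀' := by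
  obtain ⟨c, hac, hcb⟩ := EReal.exists_between_coe_real hab
  have hcb : c < b := EReal.coe_lt_coe_iff.mp hcb
  obtain ⟨x, hx_near, hx_closer⟩ := hι.exists_dist_lt_and_dist_lt_dist hne (sub_pos.mpr hcb)
  obtain ⟨t, ht_gt, ht_lt⟩ :
      ∃ t, max c (b - dist (ι x) x₀') < t ∧ t < b - dist (ι x) x₀ :=
    exists_between (max_lt (by linarith) (by linarith))
  have ht_mem : (t, x) ∈ distPast a b ι x₀ := by
    have htb : t < b := by linarith [dist_nonneg (x := ι x) (y := x₀)]
    refine ⟨⟨hac.trans (EReal.coe_lt_coe_iff.mpr ?_), EReal.coe_lt_coe_iff.mpr htb⟩, ht_lt⟩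
    exact (le_max_left _ _).trans_lt ht_gt
  intro hsub
  exact (max_lt_iff.mp ht_gt).2.not_gt (hsub ht_mem).2

end

/-- For `I = (a,b)` with `b` finite and distinct points `x₀ ≠ x₀'` in the
completion of `M`, the sets `P = {(t',x') ∈ I×M : t' < b - d(x',x₀)}` and
`P' = {(t',x') ∈ I×M : t' < b - d(x',x₀')}` satisfy `P ⊄ P'` and `P' ⊄ P`; consequently the
boundary pairs `(P,∅)` and `(P',∅)` are not causally related (in either direction). -/
theorem stmt13 {M : Type*} [MetricSpace M] (a : EReal) (b : ℝ) (hab : a < (b : EReal))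
    (x₀ x₀' : UniformSpace.Completion M) (hne : x₀ ≠ x₀')
    (P P' : Set (ℝ × M))
    (hP : P = {p : ℝ × M | p ∈ Spacetime a (b : EReal) ∧
      p.1 < b - dist (p.2 : UniformSpace.Completion M) x₀})
    (hP' : P' = {p : ℝ × M | p ∈ Spacetime a (b : EReal) ∧
      p.1 < b - dist (p.2 : UniformSpace.Completion M) x₀'}) :
    ¬ P ⊆ P' ∧ ¬ P' ⊆ P ∧ ¬ PairCausal P ∅ P' ∅ ∧ ¬ PairCausal P' ∅ P ∅ := by
  have hdense := UniformSpace.Completion.denseRange_coe (α := M)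
  have hPP' : ¬ P ⊆ P' := hP ▸ hP' ▸ distPast_not_subset hab hdense hne
  have hP'P : ¬ P' ⊆ P := hP ▸ hP' ▸ distPast_not_subset hab hdense hne.symm
  exact ⟨hPP', hP'P, fun h => hPP' h.1, fun h => hP'P h.1⟩
end
end
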